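/- Suppose a Hermitian n×n matrix ρ is supported on a subspace V (ρ = P_V ρ P_V), and each F_α acts invariantly on V (F_α V ⊆ V) with coefficients c_{in}^α defined by F_α|i⟩ = ∑_n c_{in}^α |n⟩ in an orthonormal basis {|i⟩} of V. If for every density matrix ρ supported on V and all α,β the quantity L_{F_α,F_β}[ρ] = [F_α, ρF_β†] + [F_α ρ, F_β†] vanishes, then the matrix (c_{in}^α) must be diagonal: c_{in}^α = c_i^α δ_{in}, with c_i^α independent of i. -/

import Mathlib

/-
Write `ρ = W r Wᴴ`, where the columns of `W` are the orthonormal vectors `e i`, and let `A` be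
the matrix of `F` on `V`, so that `F W = W A`. Compressing by `Wᴴ (·) W` turns the hypothesis
into `2 A r Aᴴ = r AᴴA + AᴴA r` for every `N₀ × N₀` matrix `r`. For `r = |i⟩⟨i|` the `(i, i)`
entry says `‖A i i‖² = ∑ₘ ‖A m i‖²`, so `A` is diagonal; for `r = |i⟩⟨j|` and `r = |j⟩⟨i|` the
`(i, j)` and `(j, i)` entries then add up to `|A i i - A j j|² = 0`.
-/

open Matrix

/-- The paper's `L_{F,G}[ρ] = [F, ρ G†] + [F ρ, G†]`. -/
def lindbladL {ι R : Type*} [Fintype ι] [Ring R] [StarRing R] (F G ρ : Matrix ι ι R) :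
    Matrix ι ι R :=
  (F * (ρ * Gᴴ) - ρ * Gᴴ * F) + (F * ρ * Gᴴ - Gᴴ * (F * ρ))

theorem lindbladL_single_apply {ι R : Type*} [Fintype ι] [DecidableEq ι] [CommRing R]
    [StarRing R] (A B : Matrix ι ι R) (i j p q : ι) :
    lindbladL A B (single i j 1) p q =
      2 * (A p i * star (B q j)) - (if i = p then (Bᴴ * A) j q else 0)
        - (if j = q then (Bᴴ * A) p i else 0) := by
  simp only [lindbladL, ← Matrix.mul_assoc, Matrix.add_apply, Matrix.sub_apply]
  rw [Matrix.mul_assoc _ (single i j 1), Matrix.mul_assoc (single i j 1) Bᴴ A]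
  simp [mul_apply, single_apply, Finset.sum_ite_eq, ite_and]
  ring

theorem conjTranspose_mul_lindbladL_mul {ι n R : Type*} [Fintype ι] [DecidableEq ι] [Fintype n]
    [Ring R] [StarRing R] {F G : Matrix n n R} {W : Matrix n ι R} {A B : Matrix ι ι R}
    (hW : Wᴴ * W = 1) (hF : F * W = W * A) (hG : G * W = W * B) (r : Matrix ι ι R) :
    Wᴴ * lindbladL F G (W * r * Wᴴ) * W = lindbladL A B r := by
  have hW' : ∀ X : Matrix ι ι R, Wᴴ * (W * X) = X := fun X => by
    rw [← Matrix.mul_assoc, hW, Matrix.one_mul]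
  have hF' : ∀ X : Matrix ι ι R, F * (W * X) = W * (A * X) := fun X => by
    rw [← Matrix.mul_assoc, hF, Matrix.mul_assoc]
  have hG' : ∀ X : Matrix n ι R, Wᴴ * (Gᴴ * X) = Bᴴ * (Wᴴ * X) := fun X => by
    rw [← Matrix.mul_assoc, ← conjTranspose_mul, hG, conjTranspose_mul, Matrix.mul_assoc]
  simp only [lindbladL, Matrix.mul_add, Matrix.mul_sub, Matrix.add_mul, Matrix.sub_mul,
    Matrix.mul_assoc, hW', hF', hG', hW, hF, Matrix.mul_one]

theorem sum_smul_vecMulVec_eq_mul_mul_conjTranspose {ι n R : Type*} [Fintype ι] [CommSemiring R]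
    [StarRing R] (e : ι → n → R) (r : Matrix ι ι R) :
    ∑ i, ∑ j, r i j • vecMulVec (e i) (star (e j)) = (of e)ᵀ * r * (of e)ᵀᴴ := by
  ext k l
  simp only [Matrix.sum_apply, Matrix.smul_apply, vecMulVec_apply, mul_apply, Finset.sum_mul]
  rw [Finset.sum_comm]
  refine Finset.sum_congr rfl fun i _ => Finset.sum_congr rfl fun j _ => ?_
  simp only [smul_eq_mul, transpose_apply, conjTranspose_apply, of_apply, Pi.star_apply]
  ring

theorem mul_transpose_of_eq_of_mulVec_eq {ι n R : Type*} [Fintype ι] [Fintype n] [CommSemiring R]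
    {F : Matrix n n R} {e : ι → n → R} {c : ι → ι → R}
    (h : ∀ i, F *ᵥ e i = ∑ m, c i m • e m) : F * (of e)ᵀ = (of e)ᵀ * (of c)ᵀ := by
  ext k i
  simpa [mul_apply, mulVec, dotProduct, Finset.sum_apply, mul_comm] using congrFun (h i) k

theorem conjTranspose_mul_self_transpose_of {ι n R : Type*} [DecidableEq ι] [Fintype n]
    [CommSemiring R] [StarRing R] {e : ι → n → R}
    (h : ∀ i j, star (e i) ⬝ᵥ e j = if i = j then (1 : R) else 0) :
    (of e)ᵀᴴ * (of e)ᵀ = 1 := by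
  ext i j
  simpa [mul_apply, dotProduct, one_apply] using h i j

section
variable {ι 𝕜 : Type*} [Fintype ι] [DecidableEq ι] [RCLike 𝕜] {A : Matrix ι ι 𝕜}

theorem apply_eq_zero_of_lindbladL_self_eq_zero (h : ∀ r, lindbladL A A r = 0) {m i : ι}
    (hmi : m ≠ i) : A m i = 0 := by
  have hii := congrFun₂ (h (single i i 1)) i i
  simp only [lindbladL_single_apply, ↓reduceIte, Matrix.zero_apply] at hii
  have hsum : ∑ k, ‖A k i‖ ^ 2 = ‖A i i‖ ^ 2 := by
    have hcol : (Aᴴ * A) i i = A i i * star (A i i) := by linear_combination -hii / 2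
    simp only [mul_apply, conjTranspose_apply, RCLike.star_def, RCLike.conj_mul,
      RCLike.mul_conj] at hcol
    exact_mod_cast hcol
  by_contra hne
  have := Finset.single_lt_sum hmi (Finset.mem_univ i) (Finset.mem_univ m)
    (by positivity) (fun k _ _ => sq_nonneg ‖A k i‖)
  linarith

theorem apply_self_eq_of_lindbladL_self_eq_zero (h : ∀ r, lindbladL A A r = 0) (i j : ι) :
    A i i = A j j := by
  have hdiag : ∀ k, (Aᴴ * A) k k = A k k * star (A k k) := fun k => by
    rw [mul_apply, Finset.sum_eq_single k fun m _ hm => by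
      rw [apply_eq_zero_of_lindbladL_self_eq_zero h hm, mul_zero]]
    · exact mul_comm _ _
    · simp
  have hij := congrFun₂ (h (single i j 1)) i j
  have hji := congrFun₂ (h (single j i 1)) j i
  simp only [lindbladL_single_apply, ↓reduceIte, hdiag, Matrix.zero_apply] at hij hji
  have hzero : (A i i - A j j) * star (A i i - A j j) = 0 := by
    rw [star_sub]
    linear_combination -(hij + hji) / 2
  exact sub_eq_zero.mp ((CStarRing.mul_star_self_eq_zero_iff _).mp hzero)

theorem eq_smul_one_of_lindbladL_self_eq_zero (h : ∀ r, lindbladL A A r = 0) :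
    ∃ k : 𝕜, A = k • 1 := by
  obtain _ | ⟨⟨i₀⟩⟩ := isEmpty_or_nonempty ι
  · exact ⟨0, Subsingleton.elim _ _⟩
  refine ⟨A i₀ i₀, ext fun m i => ?_⟩
  obtain rfl | hmi := eq_or_ne m i
  · simp [apply_self_eq_of_lindbladL_self_eq_zero h m i₀]
  · simp [hmi, apply_eq_zero_of_lindbladL_self_eq_zero h hmi]
end

theorem stmt_11 {n N₀ M : ℕ} (e : Fin N₀ → (Fin n → ℂ))
    (horth : ∀ i j, star (e i) ⬝ᵥ e j = if i = j then (1 : ℂ) else 0)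
    (F : Fin M → Matrix (Fin n) (Fin n) ℂ)
    (c : Fin M → Fin N₀ → Fin N₀ → ℂ)
    (hinv : ∀ α i, (F α) *ᵥ (e i) = ∑ m, c α i m • e m)
    (hL : ∀ r : Matrix (Fin N₀) (Fin N₀) ℂ, ∀ α β,
      (F α * ((∑ i, ∑ j, r i j • vecMulVec (e i) (star (e j))) * (F β)ᴴ)
        - (∑ i, ∑ j, r i j • vecMulVec (e i) (star (e j))) * (F β)ᴴ * F α)
      + (F α * (∑ i, ∑ j, r i j • vecMulVec (e i) (star (e j))) * (F β)ᴴ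
        - (F β)ᴴ * (F α * (∑ i, ∑ j, r i j • vecMulVec (e i) (star (e j))))) = 0) :
    ∃ k : Fin M → ℂ, ∀ α i m, c α i m = if i = m then k α else 0 := by
  have hW := conjTranspose_mul_self_transpose_of horth
  have hA : ∀ α r, lindbladL (of (c α))ᵀ (of (c α))ᵀ r = 0 := fun α r => by
    have hFW := mul_transpose_of_eq_of_mulVec_eq (hinv α)
    have hρ : lindbladL (F α) (F α) (∑ i, ∑ j, r i j • vecMulVec (e i) (star (e j))) = 0 :=
      hL r α α
    rw [← conjTranspose_mul_lindbladL_mul hW hFW hFW,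
      ← sum_smul_vecMulVec_eq_mul_mul_conjTranspose, hρ, Matrix.mul_zero, Matrix.zero_mul]
  choose k hk using fun α => eq_smul_one_of_lindbladL_self_eq_zero (hA α)
  refine ⟨k, fun α i m => ?_⟩
  simpa [one_apply, eq_comm] using congrFun₂ (hk α) m i
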